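/- Define the kernel S₂ on W = {(z,y) ∈ ℕ²: z ≤ y} by S₂((z₀,y₀),(z,y)) = (1−q)² (s₂(y)/s₂(y₀)) q^{y₀+y−2z} 1_{z ≤ min(y₀,y)} if z > 0, and S₂((z₀,y₀),(0,y)) = ((1−q)²/(1+q)) (s₂(y)/s₂(y₀)) q^{y₀+y}, where s₂(y) = 2y+1. Then for every (z₀,y₀) ∈ W, ∑_{(z,y)∈W} S₂((z₀,y₀),(z,y)) = 1. -/

import Mathlib

/-!
Fix the row `z`. It is an arithmetico-geometric series in `y`, of mass `C 0 = q ^ y0 / (2 y0 + 1)`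
for `z = 0` and `C z - C (z - 1)` for `1 ≤ z ≤ y0`, where `C z = (2 z + 1) q ^ (y0 - z) / (2 y0 + 1)`;
rows with `z > y0` vanish. The row masses telescope to `C y0 = 1`, and since the kernel is
nonnegative, summing row by row computes the sum over `ℕ × ℕ`.
-/

/-- The kernel S₂ on W = {(z,y) ∈ ℕ² : z ≤ y}, with s₂(y) = 2y+1. -/
noncomputable def S2 (q : ℝ) (z0 y0 z y : ℕ) : ℝ :=
  if z = 0 then
    ((1 - q) ^ 2 / (1 + q)) * ((2 * (y : ℝ) + 1) / (2 * (y0 : ℝ) + 1)) * q ^ (y0 + y)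
  else
    (if z ≤ min y0 y then (1 : ℝ) else 0) *
      ((1 - q) ^ 2 * ((2 * (y : ℝ) + 1) / (2 * (y0 : ℝ) + 1)) * q ^ (y0 + y - 2 * z))

open Finset

theorem hasSum_affine_mul_geometric {𝕜 : Type*} [NormedField 𝕜] [CompleteSpace 𝕜] {r : 𝕜}
    (hr : ‖r‖ < 1) (a b : 𝕜) :
    HasSum (fun n : ℕ => (a * n + b) * r ^ n) (a * r / (1 - r) ^ 2 + b / (1 - r)) := by
  rw [mul_div_assoc, div_eq_mul_inv b]
  exact (((hasSum_coe_mul_geometric_of_norm_lt_one hr).mul_left a).add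
    ((hasSum_geometric_of_norm_lt_one hr).mul_left b)).congr_fun fun n => by ring

namespace S2

noncomputable def cumMass (q : ℝ) (y0 z : ℕ) : ℝ :=
  (2 * z + 1) * q ^ (y0 - z) / (2 * y0 + 1)

noncomputable def rowMass (q : ℝ) (y0 : ℕ) : ℕ → ℝ
  | 0 => cumMass q y0 0
  | z + 1 => if z + 1 ≤ y0 then cumMass q y0 (z + 1) - cumMass q y0 z else 0

theorem sum_range_rowMass (q : ℝ) (y0 : ℕ) : ∑ z ∈ range (y0 + 1), rowMass q y0 z = 1 := by
  have hstep : ∀ z ∈ range y0, rowMass q y0 (z + 1) = cumMass q y0 (z + 1) - cumMass q y0 z :=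
    fun z hz => if_pos (mem_range.mp hz)
  rw [sum_range_succ', sum_congr rfl hstep, sum_range_sub]
  simp only [rowMass, cumMass, Nat.sub_self, pow_zero, mul_one, sub_add_cancel]
  exact div_self (by positivity)

theorem rowMass_eq_zero_of_lt {q : ℝ} {y0 z : ℕ} (hz : y0 < z) : rowMass q y0 z = 0 := by
  cases z with
  | zero => omega
  | succ z => exact if_neg (by omega)

variable {q : ℝ} (z0 y0 : ℕ)

theorem nonneg (hq : 0 ≤ q) (z y : ℕ) : 0 ≤ S2 q z0 y0 z y := by
  unfold S2
  split_ifs <;> positivity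

theorem eq_zero_of_lt {z : ℕ} (hz : y0 < z) (y : ℕ) : S2 q z0 y0 z y = 0 := by
  simp [S2, show z ≠ 0 by omega, show ¬z ≤ min y0 y by omega]

theorem hasSum_row_zero (hq : |q| < 1) : HasSum (S2 q z0 y0 0) (cumMass q y0 0) := by
  have h1q : 1 - q ≠ 0 := by linarith [abs_lt.mp hq]
  have h1q' : 1 + q ≠ 0 := by linarith [abs_lt.mp hq]
  have hmass : cumMass q y0 0 =
      (1 - q) ^ 2 / (1 + q) * q ^ y0 / (2 * y0 + 1) * (2 * q / (1 - q) ^ 2 + 1 / (1 - q)) := by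
    simp only [cumMass, Nat.sub_zero]
    field_simp
    ring
  rw [hmass]
  refine ((hasSum_affine_mul_geometric (r := q) (by simpa using hq) 2 1).mul_left _).congr_fun
    fun y => ?_
  simp only [S2, if_true, pow_add]
  ring

theorem hasSum_row_succ (hq : |q| < 1) {z : ℕ} (hz : z + 1 ≤ y0) :
    HasSum (fun y => if z + 1 ≤ y then S2 q z0 y0 (z + 1) y else 0)
      (cumMass q y0 (z + 1) - cumMass q y0 z) := by
  have h1q : 1 - q ≠ 0 := by linarith [abs_lt.mp hq]
  have hmass : cumMass q y0 (z + 1) - cumMass q y0 z = (1 - q) ^ 2 * q ^ (y0 - (z + 1)) /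
      (2 * y0 + 1) * (2 * q / (1 - q) ^ 2 + (2 * (z + 1) + 1) / (1 - q)) := by
    have hexp : y0 - z = y0 - (z + 1) + 1 := by omega
    simp only [cumMass, hexp, pow_succ]
    field_simp
    push_cast
    ring
  rw [hmass, ← (add_left_injective (z + 1)).hasSum_iff
    fun y hy => if_neg fun hzy => hy ⟨y - (z + 1), by simp [hzy]⟩]
  refine ((hasSum_affine_mul_geometric (r := q) (by simpa using hq) 2 _).mul_left _).congr_fun
    fun y => ?_
  have hexp : y0 + (y + (z + 1)) - 2 * (z + 1) = y0 - (z + 1) + y := by omega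
  simp only [Function.comp, S2, if_pos (Nat.le_add_left _ _), Nat.add_one_ne_zero, if_false,
    if_pos (show z + 1 ≤ min y0 (y + (z + 1)) by omega), hexp, pow_add]
  push_cast
  ring

theorem hasSum_row (hq : |q| < 1) (z : ℕ) :
    HasSum (fun y => if z ≤ y then S2 q z0 y0 z y else 0) (rowMass q y0 z) := by
  cases z with
  | zero => simpa [rowMass] using hasSum_row_zero z0 y0 hq
  | succ z =>
    by_cases hz : z + 1 ≤ y0
    · simpa only [rowMass, if_pos hz] using hasSum_row_succ z0 y0 hq hz
    · simp only [rowMass, if_neg hz, eq_zero_of_lt z0 y0 (not_le.mp hz), ite_self]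
      exact hasSum_zero

end S2

theorem S2_is_markov_general (q : ℝ) (hq : q ∈ Set.Ioo (0:ℝ) 1) (z0 y0 : ℕ) :
    ∑' p : ℕ × ℕ, (if p.1 ≤ p.2 then S2 q z0 y0 p.1 p.2 else 0) = 1 := by
  set F : ℕ × ℕ → ℝ := fun p => if p.1 ≤ p.2 then S2 q z0 y0 p.1 p.2 else 0
  have hq' : |q| < 1 := abs_lt.mpr ⟨by linarith [hq.1], hq.2⟩
  have hrow (z : ℕ) : HasSum (fun y => F (z, y)) (S2.rowMass q y0 z) := S2.hasSum_row z0 y0 hq' z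
  have hrow_zero : ∀ z ∉ range (y0 + 1), ∑' y, F (z, y) = 0 := fun z hz =>
    (hrow z).tsum_eq.trans (S2.rowMass_eq_zero_of_lt (by simpa using hz))
  have hF : Summable F := by
    refine (summable_prod_of_nonneg fun p => ?_).mpr
      ⟨fun z => (hrow z).summable, summable_of_ne_finset_zero hrow_zero⟩
    dsimp only [F]
    split_ifs
    exacts [S2.nonneg z0 y0 hq.1.le _ _, le_rfl]
  rw [hF.tsum_prod' fun z => (hrow z).summable, tsum_eq_sum hrow_zero]
  simp_rw [fun z => (hrow z).tsum_eq]
  exact S2.sum_range_rowMass q y0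

/-- S₂ is a Markov kernel on W = {(z,y) ∈ ℕ² : z ≤ y}. -/
theorem S2_is_markov (q : ℝ) (hq : q ∈ Set.Ioo (0:ℝ) 1) (z0 y0 : ℕ) (h : z0 ≤ y0) :
    ∑' p : ℕ × ℕ, (if p.1 ≤ p.2 then S2 q z0 y0 p.1 p.2 else 0) = 1 :=
  S2_is_markov_general q hq z0 y0
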